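/- arXiv:0708.4371 — 2 statements merged into one kernel-verified Lean document; each statement's English description precedes it below -/
import Mathlib

section
/- Let σ : [a,b] → ℂ be a C¹ parametrization of a Jordan curve with σ'(a) = σ'(b) and |σ'(t)| > 0 for all t ∈ [a,b]. Let φ : [a,b] → ℝ be a continuous function such that σ'(t) = |σ'(t)|·exp(i·φ(t)) for all t ∈ [a,b]. Then φ(b) − φ(a) equals either 2π or −2π. -/
/-!
Hopf's argument. Extend `σ` to an `L`-periodic simple `C¹` curve `f`, `L = b - a`, and base it
at a lowest point `c`, where the tangent `f' c` is real. The secant map, which sends `(s, t)` to a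
positive multiple of `f t - f s`, to `f' t` on the diagonal and to `-f' s` at `(s, s + L)`, is
continuous and nonvanishing on the convex strip `s ≤ t ≤ s + L`, so it has a continuous argument
there. The tangent turns along the diagonal from `(c, c)` to `(c + L, c + L)` by as much as the
secant turns along the two edges through `(c, c + L)`. On the first edge the secant stays in the
closed upper half plane and on the second in the closed lower one, while it goes from `f' c` to
`-f' c` and back; so each edge contributes the same `±π`. Finally, the turning of the tangent over
one period does not depend on the base point.
-/

open Set Complex

namespace Umlauf

section ArgLift

variable {X : Type*} [TopologicalSpace X]

def IsArgLiftOn (F : X → ℂ) (θ : X → ℝ) (s : Set X) : Prop :=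
  ContinuousOn θ s ∧ ∀ x ∈ s, F x = ‖F x‖ * exp (I * θ x)

variable {F : X → ℂ} {θ θ' : X → ℝ} {s : Set X}

lemma IsArgLiftOn.mono {t : Set X} (h : IsArgLiftOn F θ s) (hts : t ⊆ s) : IsArgLiftOn F θ t :=
  ⟨h.1.mono hts, fun x hx => h.2 x (hts hx)⟩

lemma IsArgLiftOn.congr {G : X → ℂ} (h : IsArgLiftOn F θ s) (hFG : EqOn F G s) :
    IsArgLiftOn G θ s :=
  ⟨h.1, fun x hx => hFG hx ▸ h.2 x hx⟩

lemma IsArgLiftOn.comp {Y : Type*} [TopologicalSpace Y] {g : Y → X} {u : Set Y}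
    (h : IsArgLiftOn F θ s) (hg : ContinuousOn g u) (hgu : MapsTo g u s) :
    IsArgLiftOn (F ∘ g) (θ ∘ g) u :=
  ⟨h.1.comp hg hgu, fun y hy => h.2 (g y) (hgu hy)⟩

lemma IsArgLiftOn.neg (h : IsArgLiftOn F θ s) :
    IsArgLiftOn (fun x => -F x) (fun x => θ x + Real.pi) s := by
  refine ⟨h.1.add continuousOn_const, fun x hx => ?_⟩
  rw [norm_neg, ofReal_add, mul_add, exp_add, mul_comm I (Real.pi : ℂ), exp_pi_mul_I]
  linear_combination -h.2 x hx

lemma isArgLiftOn_arg (hF : ContinuousOn F s) (h0 : ∀ x ∈ s, F x ≠ 0)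
    (him : ∀ x ∈ s, 0 ≤ (F x).im) : IsArgLiftOn F (arg ∘ F) s := by
  refine ⟨fun x hx => ?_, fun x _ => ?_⟩
  · refine ContinuousWithinAt.comp (t := {z | 0 ≤ z.im}) ?_ (hF x hx) (fun y hy => him y hy)
    by_cases hslit : F x ∈ slitPlane
    · exact (continuousAt_arg hslit).continuousWithinAt
    · rw [mem_slitPlane_iff, not_or, not_lt, not_ne_iff] at hslit
      exact continuousWithinAt_arg_of_re_neg_of_im_zero
        (hslit.1.lt_of_ne fun h => h0 x hx (Complex.ext h hslit.2)) hslit.2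
  · rw [Function.comp_apply, mul_comm I, norm_mul_exp_arg_mul_I]

lemma IsArgLiftOn.sub_mem_zmultiples (h : IsArgLiftOn F θ s) (h' : IsArgLiftOn F θ' s)
    {x : X} (hx : x ∈ s) (h0 : F x ≠ 0) :
    θ x - θ' x ∈ AddSubgroup.zmultiples (2 * Real.pi) := by
  have hexp : exp (I * θ x) = exp (I * θ' x) :=
    mul_left_cancel₀ (by simpa using h0) ((h.2 x hx).symm.trans (h'.2 x hx))
  obtain ⟨n, hn⟩ := exp_eq_exp_iff_exists_int.mp hexp
  have : θ x = θ' x + n * (2 * Real.pi) := by simpa using congrArg im hn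
  exact ⟨n, by simp only [zsmul_eq_mul]; linarith⟩

lemma IsArgLiftOn.sub_eq_sub (hs : IsPreconnected s) (h0 : ∀ x ∈ s, F x ≠ 0)
    (h : IsArgLiftOn F θ s) (h' : IsArgLiftOn F θ' s) {x y : X} (hx : x ∈ s) (hy : y ∈ s) :
    θ y - θ x = θ' y - θ' x := by
  have hdisc : IsDiscrete (AddSubgroup.zmultiples (2 * Real.pi) : Set ℝ) :=
    isDiscrete_iff_discreteTopology.mpr (NormedSpace.discreteTopology_zmultiples _)
  have := hs.constant_of_mapsTo hdisc (h.1.sub h'.1)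
    (fun z hz => h.sub_mem_zmultiples h' hz (h0 z hz)) hy hx
  simp only [Pi.sub_apply] at this
  linarith

lemma IsArgLiftOn.sub_eq_arg_sub_arg (hs : IsPreconnected s) (hF : ContinuousOn F s)
    (h0 : ∀ x ∈ s, F x ≠ 0) (him : ∀ x ∈ s, 0 ≤ (F x).im) (h : IsArgLiftOn F θ s)
    {x y : X} (hx : x ∈ s) (hy : y ∈ s) : θ y - θ x = arg (F y) - arg (F x) :=
  h.sub_eq_sub hs h0 (isArgLiftOn_arg hF h0 him) hx hy

lemma IsArgLiftOn.sub_eq_arg_neg_sub_arg_neg (hs : IsPreconnected s) (hF : ContinuousOn F s)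
    (h0 : ∀ x ∈ s, F x ≠ 0) (him : ∀ x ∈ s, (F x).im ≤ 0) (h : IsArgLiftOn F θ s)
    {x y : X} (hx : x ∈ s) (hy : y ∈ s) : θ y - θ x = arg (-F y) - arg (-F x) := by
  have := h.neg.sub_eq_arg_sub_arg hs hF.neg (fun z hz => neg_ne_zero.mpr (h0 z hz))
    (fun z hz => by simpa using him z hz) hx hy
  rw [Pi.neg_apply, Pi.neg_apply] at this
  linarith

end ArgLift

lemma exists_isArgLiftOn_of_convex {E : Type*} [NormedAddCommGroup E] [NormedSpace ℝ E]
    {K : Set E} (hK : Convex ℝ K) {F : E → ℂ} (hF : ContinuousOn F K) (h0 : ∀ x ∈ K, F x ≠ 0) :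
    ∃ θ : E → ℝ, IsArgLiftOn F θ K := by
  classical
  rcases K.eq_empty_or_nonempty with rfl | ⟨x₀, hx₀⟩
  · exact ⟨0, continuousOn_empty _, fun _ h => h.elim⟩
  have := hK.contractibleSpace ⟨x₀, hx₀⟩
  have := hK.locallyPathConnectedSpace
  obtain ⟨G, ⟨-, hG⟩, -⟩ := isCoveringMapOn_exp.existsUnique_continuousMap_lifts
    ⟨K.domRestrict F, continuousOn_iff_continuous_domRestrict.mp hF⟩ (a₀ := ⟨x₀, hx₀⟩)
    (exp_log (h0 x₀ hx₀)) (fun x => h0 x x.2)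
  refine ⟨fun x => if hx : x ∈ K then (G ⟨x, hx⟩).im else 0, ?_, fun x hx => ?_⟩
  · rw [continuousOn_iff_continuous_domRestrict]
    convert continuous_im.comp G.continuous
    ext ⟨x, hx⟩
    simp [hx]
  · have hGx : exp (G ⟨x, hx⟩) = F x := congrFun hG ⟨x, hx⟩
    simp only [dif_pos hx]
    rw [← hGx, ← re_add_im (G ⟨x, hx⟩), exp_add, norm_mul, ← ofReal_exp, norm_exp_ofReal_mul_I]
    simp [mul_comm I]

lemma IsArgLiftOn.sub_eq_of_periodic {F : ℝ → ℂ} {L : ℝ} (hF : Continuous F)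
    (hper : Function.Periodic F L) (h0 : ∀ t, F t ≠ 0) (hL : 0 ≤ L) {x y : ℝ} {θ θ' : ℝ → ℝ}
    (hθ : IsArgLiftOn F θ (Icc x (x + L))) (hθ' : IsArgLiftOn F θ' (Icc y (y + L))) :
    θ (x + L) - θ x = θ' (y + L) - θ' y := by
  obtain ⟨Θ, hΘ⟩ := exists_isArgLiftOn_of_convex convex_univ hF.continuousOn fun t _ => h0 t
  have hshift : IsArgLiftOn F (fun t => Θ (t + L)) univ :=
    (hΘ.comp (g := (· + L)) (by fun_prop) (mapsTo_univ _ _)).congr fun t _ => hper t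
  have key := hshift.sub_eq_sub isPreconnected_univ (fun t _ => h0 t) hΘ (mem_univ x) (mem_univ y)
  have hx := hθ.sub_eq_sub isPreconnected_Icc (fun t _ => h0 t) (hΘ.mono (subset_univ _))
    (left_mem_Icc.mpr (by linarith)) (right_mem_Icc.mpr (by linarith))
  have hy := hθ'.sub_eq_sub isPreconnected_Icc (fun t _ => h0 t) (hΘ.mono (subset_univ _))
    (left_mem_Icc.mpr (by linarith)) (right_mem_Icc.mpr (by linarith))
  linarith

lemma arg_neg_sub_arg_of_im_eq_zero {z : ℂ} (hz : z ≠ 0) (him : z.im = 0) :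
    arg (-z) - arg z = Real.pi ∨ arg (-z) - arg z = -Real.pi := by
  lift z to ℝ using him
  rcases (ofReal_ne_zero.mp hz).lt_or_gt with h | h
  · right
    rw [← ofReal_neg, arg_ofReal_of_nonneg (by linarith), arg_ofReal_of_neg h, zero_sub]
  · left
    rw [← ofReal_neg, arg_ofReal_of_neg (by linarith), arg_ofReal_of_nonneg h.le, sub_zero]

section ChordSlope

noncomputable def chordSlope (f' : ℝ → ℂ) (s t : ℝ) : ℂ :=
  ∫ u in (0 : ℝ)..1, f' (s + u * (t - s))

variable {f f' : ℝ → ℂ}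

lemma continuous_chordSlope (hf' : Continuous f') :
    Continuous fun p : ℝ × ℝ => chordSlope f' p.1 p.2 :=
  intervalIntegral.continuous_parametric_intervalIntegral_of_continuous' (by fun_prop) 0 1

@[simp] lemma chordSlope_self (s : ℝ) : chordSlope f' s s = f' s := by
  simp [chordSlope]

lemma sub_mul_chordSlope (hf : ∀ t, HasDerivAt f (f' t) t) (hf' : Continuous f') (s t : ℝ) :
    ((t - s : ℝ) : ℂ) * chordSlope f' s t = f t - f s := by
  have hderiv : ∀ u ∈ uIcc (0 : ℝ) 1,
      HasDerivAt (fun u : ℝ => f (s + u * (t - s))) ((t - s) * f' (s + u * (t - s))) u := by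
    intro u _
    have := (hf (s + u * (t - s))).scomp u (((hasDerivAt_id u).mul_const (t - s)).const_add s)
    simpa [Function.comp_def, mul_comm] using this
  push_cast
  rw [chordSlope, ← intervalIntegral.integral_const_mul,
    intervalIntegral.integral_eq_sub_of_hasDerivAt hderiv
      ((by fun_prop : Continuous _).intervalIntegrable 0 1)]
  simp

end ChordSlope

-- For `f` with derivative `f'`: off the diagonal this is `(f t - f s) / (t - s)` when
-- `t - s ≤ L / 2`, and otherwise minus the slope of the complementary chord from `t - L` to `s`;
-- for `L`-periodic `f` the two agree on `t - s = L / 2`.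
noncomputable def secantMap (f' : ℝ → ℂ) (L : ℝ) (p : ℝ × ℝ) : ℂ :=
  if p.2 - p.1 ≤ L / 2 then chordSlope f' p.1 p.2 else -chordSlope f' (p.2 - L) p.1

lemma convex_strip (L : ℝ) : Convex ℝ {p : ℝ × ℝ | p.1 ≤ p.2 ∧ p.2 ≤ p.1 + L} := by
  rintro p ⟨hp₁, hp₂⟩ q ⟨hq₁, hq₂⟩ a b ha hb hab
  constructor <;> simp only [Prod.fst_add, Prod.snd_add, Prod.smul_fst, Prod.smul_snd,
    smul_eq_mul] <;> nlinarith

section PeriodicCurve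

variable {f f' : ℝ → ℂ} {L : ℝ}

lemma secantMap_self (hL : 0 ≤ L) (t : ℝ) : secantMap f' L (t, t) = f' t := by
  rw [secantMap, if_pos (by simp only [sub_self]; positivity), chordSlope_self]

lemma secantMap_add_period (hL : 0 < L) (s : ℝ) : secantMap f' L (s, s + L) = -f' s := by
  simp [secantMap, hL]

lemma periodic_of_hasDerivAt (hf : ∀ t, HasDerivAt f (f' t) t) (hper : Function.Periodic f L) :
    Function.Periodic f' L := fun t => by
  rw [← (hf t).deriv, ← (hf (t + L)).deriv, ← deriv_comp_add_const, hper.funext]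

variable (hf : ∀ t, HasDerivAt f (f' t) t) (hf' : Continuous f') (hper : Function.Periodic f L)
include hf hf' hper

lemma continuous_secantMap (hL : L ≠ 0) : Continuous (secantMap f' L) := by
  have hback : Continuous fun p : ℝ × ℝ => chordSlope f' (p.2 - L) p.1 :=
    (continuous_chordSlope hf').comp (by fun_prop : Continuous fun p : ℝ × ℝ => (p.2 - L, p.1))
  refine Continuous.if_le (continuous_chordSlope hf') hback.neg (by fun_prop) continuous_const ?_
  rintro ⟨s, t⟩ (hst : t - s = L / 2)
  have h₁ := sub_mul_chordSlope hf hf' s t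
  have h₂ := sub_mul_chordSlope hf hf' (t - L) s
  rw [hst] at h₁
  rw [hper.sub_eq, show s - (t - L) = L / 2 by linarith] at h₂
  refine mul_left_cancel₀ (by exact_mod_cast div_ne_zero hL two_ne_zero : ((L / 2 : ℝ) : ℂ) ≠ 0) ?_
  linear_combination h₁ + h₂

lemma secantMap_eq_pos_mul {s t : ℝ} (hst : s < t) (hts : t < s + L) :
    ∃ r : ℝ, 0 < r ∧ secantMap f' L (s, t) = r * (f t - f s) := by
  unfold secantMap
  split_ifs
  · have hts : 0 < t - s := sub_pos.mpr hst
    refine ⟨(t - s)⁻¹, inv_pos.mpr hts, ?_⟩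
    rw [← sub_mul_chordSlope hf hf' s t, ← mul_assoc, ← ofReal_mul, inv_mul_cancel₀ hts.ne',
      ofReal_one, one_mul]
  · have hst' : 0 < s - (t - L) := by linarith
    refine ⟨(s - (t - L))⁻¹, inv_pos.mpr hst', ?_⟩
    rw [← neg_sub (f s), ← hper.sub_eq t, ← sub_mul_chordSlope hf hf' (t - L) s, mul_neg,
      ← mul_assoc, ← ofReal_mul, inv_mul_cancel₀ hst'.ne', ofReal_one, one_mul]

lemma secantMap_ne_zero (hL : 0 < L) (hne : ∀ t, f' t ≠ 0)
    (hsimple : ∀ s t, s < t → t < s + L → f s ≠ f t) {s t : ℝ} (hst : s ≤ t) (hts : t ≤ s + L) :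
    secantMap f' L (s, t) ≠ 0 := by
  rcases hst.eq_or_lt with rfl | hst
  · rw [secantMap_self hL.le]
    exact hne s
  rcases hts.eq_or_lt with rfl | hts
  · rw [secantMap_add_period hL]
    exact neg_ne_zero.mpr (hne s)
  obtain ⟨r, hr, hsec⟩ := secantMap_eq_pos_mul hf hf' hper hst hts
  rw [hsec]
  exact mul_ne_zero (ofReal_ne_zero.mpr hr.ne') (sub_ne_zero.mpr (hsimple s t hst hts).symm)

lemma im_secantMap_left_nonneg (hL : 0 < L) {c : ℝ} (hc : ∀ t, (f c).im ≤ (f t).im)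
    (him : (f' c).im = 0) {t : ℝ} (ht : t ∈ Icc c (c + L)) :
    0 ≤ (secantMap f' L (c, t)).im := by
  rcases ht.1.eq_or_lt with rfl | hct
  · rw [secantMap_self hL.le, him]
  rcases ht.2.eq_or_lt with rfl | htc
  · rw [secantMap_add_period hL, neg_im, him, neg_zero]
  obtain ⟨r, hr, hsec⟩ := secantMap_eq_pos_mul hf hf' hper hct htc
  rw [hsec, im_ofReal_mul, sub_im]
  exact mul_nonneg hr.le (sub_nonneg.mpr (hc t))

lemma im_secantMap_right_nonpos (hL : 0 < L) {c : ℝ} (hc : ∀ t, (f c).im ≤ (f t).im)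
    (him : (f' c).im = 0) {s : ℝ} (hs : s ∈ Icc c (c + L)) :
    (secantMap f' L (s, c + L)).im ≤ 0 := by
  rcases hs.1.eq_or_lt with rfl | hcs
  · rw [secantMap_add_period hL, neg_im, him, neg_zero]
  rcases hs.2.eq_or_lt with rfl | hsc
  · rw [secantMap_self hL.le, periodic_of_hasDerivAt hf hper, him]
  obtain ⟨r, hr, hsec⟩ := secantMap_eq_pos_mul hf hf' hper hsc (by linarith)
  rw [hsec, im_ofReal_mul, sub_im, hper]
  exact mul_nonpos_of_nonneg_of_nonpos hr.le (sub_nonpos.mpr (hc s))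

theorem sub_eq_two_pi_or_neg_of_forall_im_le (hL : 0 < L) (hne : ∀ t, f' t ≠ 0)
    (hsimple : ∀ s t, s < t → t < s + L → f s ≠ f t) {c : ℝ} (hc : ∀ t, (f c).im ≤ (f t).im)
    {θ : ℝ → ℝ} (hθ : IsArgLiftOn f' θ (Icc c (c + L))) :
    θ (c + L) - θ c = 2 * Real.pi ∨ θ (c + L) - θ c = -(2 * Real.pi) := by
  have him : (f' c).im = 0 := IsLocalMin.hasDerivAt_eq_zero (Filter.Eventually.of_forall hc)
    (imCLM.hasFDerivAt.comp_hasDerivAt c (hf c))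
  set S : Set (ℝ × ℝ) := {p | p.1 ≤ p.2 ∧ p.2 ≤ p.1 + L}
  have hsec := (continuous_secantMap hf hf' hper hL.ne').continuousOn (s := S)
  have hsec0 : ∀ p ∈ S, secantMap f' L p ≠ 0 := fun p hp =>
    secantMap_ne_zero hf hf' hper hL hne hsimple hp.1 hp.2
  obtain ⟨Θ, hΘ⟩ := exists_isArgLiftOn_of_convex (convex_strip L) hsec hsec0
  have hI : IsPreconnected (Icc c (c + L)) := isPreconnected_Icc
  have hc₀ : c ∈ Icc c (c + L) := left_mem_Icc.mpr (by linarith)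
  have hc₁ : c + L ∈ Icc c (c + L) := right_mem_Icc.mpr (by linarith)
  have hdiag : MapsTo (fun t => (t, t)) (Icc c (c + L)) S := fun t _ => ⟨le_rfl, by simp [hL.le]⟩
  have hleft : MapsTo (fun t => (c, t)) (Icc c (c + L)) S := fun t ht => ht
  have hright : MapsTo (fun s => (s, c + L)) (Icc c (c + L)) S :=
    fun s hs => ⟨hs.2, by linarith [hs.1]⟩
  have hturn : θ (c + L) - θ c = Θ (c + L, c + L) - Θ (c, c) :=
    hθ.sub_eq_sub hI (fun t _ => hne t)
      ((hΘ.comp (by fun_prop) hdiag).congr fun t _ => secantMap_self hL.le t) hc₀ hc₁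
  have hedge₁ : Θ (c, c + L) - Θ (c, c) = arg (-f' c) - arg (f' c) := by
    have := (hΘ.comp (by fun_prop) hleft).sub_eq_arg_sub_arg hI (hsec.comp (by fun_prop) hleft)
      (fun t ht => hsec0 _ (hleft ht))
      (fun t ht => im_secantMap_left_nonneg hf hf' hper hL hc him ht) hc₀ hc₁
    simpa [secantMap_self hL.le, secantMap_add_period hL] using this
  have hedge₂ : Θ (c + L, c + L) - Θ (c, c + L) = arg (-f' c) - arg (f' c) := by
    have := (hΘ.comp (by fun_prop) hright).sub_eq_arg_neg_sub_arg_neg hI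
      (hsec.comp (by fun_prop) hright) (fun s hs => hsec0 _ (hright hs))
      (fun s hs => im_secantMap_right_nonpos hf hf' hper hL hc him hs) hc₀ hc₁
    simpa [secantMap_self hL.le, secantMap_add_period hL, periodic_of_hasDerivAt hf hper c]
      using this
  rcases arg_neg_sub_arg_of_im_eq_zero (hne c) him with h | h
  · left; linarith
  · right; linarith

theorem sub_eq_two_pi_or_neg_of_periodic (hL : 0 < L) (hne : ∀ t, f' t ≠ 0)
    (hsimple : ∀ s t, s < t → t < s + L → f s ≠ f t) {x : ℝ} {θ : ℝ → ℝ}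
    (hθ : IsArgLiftOn f' θ (Icc x (x + L))) :
    θ (x + L) - θ x = 2 * Real.pi ∨ θ (x + L) - θ x = -(2 * Real.pi) := by
  have hfc : Continuous f := continuous_iff_continuousAt.mpr fun t => (hf t).continuousAt
  obtain ⟨_, ⟨c, rfl⟩, hmin⟩ := (hper.compact_of_continuous hL.ne' hfc).exists_isMinOn
    (range_nonempty f) continuous_im.continuousOn
  obtain ⟨Θ, hΘ⟩ :=
    exists_isArgLiftOn_of_convex (convex_Icc c (c + L)) hf'.continuousOn fun t _ => hne t
  rw [hθ.sub_eq_of_periodic hf' (periodic_of_hasDerivAt hf hper) hne hL.le hΘ]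
  exact sub_eq_two_pi_or_neg_of_forall_im_le hf hf' hper hL hne hsimple (fun t => hmin ⟨t, rfl⟩) hΘ

end PeriodicCurve

lemma _root_.Function.Periodic.ne_of_injOn {α : Type*} {f : ℝ → α} {L a : ℝ} (hL : 0 < L)
    (hper : Function.Periodic f L) (hinj : InjOn f (Ico a (a + L))) {s t : ℝ} (hst : s < t)
    (hts : t < s + L) : f s ≠ f t := by
  have hmod : ∀ x, f (toIcoMod hL a x) = f x := fun x => hper.sub_zsmul_eq _
  intro heq
  rw [← hmod s, ← hmod t] at heq
  obtain ⟨n, hn⟩ := (toIcoMod_eq_toIcoMod hL).mp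
    (hinj (toIcoMod_mem_Ico hL a s) (toIcoMod_mem_Ico hL a t) heq)
  rw [zsmul_eq_mul] at hn
  have h₀ : (0 : ℤ) < n := by exact_mod_cast pos_of_mul_pos_left (hn ▸ sub_pos.mpr hst) hL.le
  have h₁ : n < 1 := by exact_mod_cast (show (n : ℝ) < 1 by nlinarith)
  omega

lemma exists_periodic_extension {B : Type*} [TopologicalSpace B] {a b : ℝ} (hab : a < b)
    {g : ℝ → B} (hg : ContinuousOn g (Icc a b)) (hgab : g a = g b) :
    ∃ G : ℝ → B, Continuous G ∧ Function.Periodic G (b - a) ∧ EqOn G g (Icc a b) := by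
  have : Fact (0 < b - a) := ⟨sub_pos.mpr hab⟩
  have hb : a + (b - a) = b := add_sub_cancel a b
  refine ⟨fun t => AddCircle.liftIco (b - a) a g t, ?_, fun t => ?_, fun t ht => ?_⟩
  · exact (AddCircle.liftIco_continuous (by rwa [hb]) (by rwa [hb])).comp
      (AddCircle.continuous_mk' _)
  · simp only [AddCircle.coe_add_period]
  · rcases ht.2.lt_or_eq with htb | htb
    · exact AddCircle.liftIco_coe_apply ⟨ht.1, by linarith⟩
    · have hcoe : ((b : ℝ) : AddCircle (b - a)) = a := by
        simpa [hb] using AddCircle.coe_add_period (b - a) a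
      simp only [htb, hcoe]
      rw [AddCircle.liftIco_coe_apply ⟨le_rfl, by linarith⟩, hgab]

lemma exists_periodic_primitive {a b : ℝ} (hab : a ≤ b) {σ G : ℝ → ℂ} (hG : Continuous G)
    (hGper : Function.Periodic G (b - a))
    (hderiv : ∀ t ∈ Icc a b, HasDerivWithinAt σ (G t) (Icc a b) t) (hclosed : σ a = σ b) :
    ∃ f : ℝ → ℂ, (∀ t, HasDerivAt f (G t) t) ∧ Function.Periodic f (b - a) ∧
      EqOn f σ (Icc a b) := by
  have hftc : ∀ t ∈ Icc a b, ∫ u in a..t, G u = σ t - σ a := fun t ht =>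
    intervalIntegral.integral_eq_sub_of_hasDeriv_right_of_le ht.1
      (fun x hx => ((hderiv x ⟨hx.1, hx.2.trans ht.2⟩).continuousWithinAt.mono
        (Icc_subset_Icc le_rfl ht.2)))
      (fun x hx => ((hderiv x ⟨hx.1.le, hx.2.le.trans ht.2⟩).hasDerivAt
        (Icc_mem_nhds hx.1 (hx.2.trans_le ht.2))).hasDerivWithinAt)
      (hG.intervalIntegrable _ _)
  refine ⟨fun t => σ a + ∫ u in a..t, G u,
    fun t => (hG.integral_hasStrictDerivAt a t).hasDerivAt.const_add _, fun t => ?_,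
    fun t ht => by simp only [hftc t ht, add_sub_cancel]⟩
  have hperiod : ∫ u in t..t + (b - a), G u = 0 := by
    rw [hGper.intervalIntegral_add_eq t a, add_sub_cancel, hftc b (right_mem_Icc.mpr hab),
      hclosed, sub_self]
  dsimp only
  rw [← intervalIntegral.integral_add_adjacent_intervals (hG.intervalIntegrable a t)
    (hG.intervalIntegrable t _), hperiod, add_zero]

end Umlauf

open Umlauf in
/-- **Hopf's Umlaufsatz.** If `σ : [a,b] → ℂ` is a `C¹` parametrization of a Jordan
curve with `σ'(a) = σ'(b)` and nonvanishing derivative, and `φ` is a continuous lift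
of the argument of the tangent vector, then `φ(b) - φ(a) = ±2π`. -/
theorem umlaufsatz (a b : ℝ) (hab : a < b) (σ σ' : ℝ → ℂ) (φ : ℝ → ℝ)
    (hderiv : ∀ t ∈ Set.Icc a b, HasDerivWithinAt σ (σ' t) (Set.Icc a b) t)
    (hC1 : ContinuousOn σ' (Set.Icc a b))
    (hclosed : σ a = σ b)
    (hinj : Set.InjOn σ (Set.Ico a b))
    (hper : σ' a = σ' b)
    (hne : ∀ t ∈ Set.Icc a b, 0 < ‖σ' t‖)
    (hφ : ContinuousOn φ (Set.Icc a b))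
    (hlift : ∀ t ∈ Set.Icc a b,
      σ' t = (‖σ' t‖ : ℂ) * Complex.exp (Complex.I * (φ t : ℂ))) :
    φ b - φ a = 2 * Real.pi ∨ φ b - φ a = -(2 * Real.pi) := by
  have hL : 0 < b - a := sub_pos.mpr hab
  have hb : a + (b - a) = b := add_sub_cancel a b
  obtain ⟨G, hG, hGper, hGσ'⟩ := exists_periodic_extension hab hC1 hper
  obtain ⟨f, hf, hfper, hfσ⟩ :=
    exists_periodic_primitive hab.le hG hGper (fun t ht => hGσ' ht ▸ hderiv t ht) hclosed
  have hsimple : ∀ s t, s < t → t < s + (b - a) → f s ≠ f t := fun s t =>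
    hfper.ne_of_injOn hL (hb ▸ hinj.congr (hfσ.mono Ico_subset_Icc_self).symm)
  have hG0 : ∀ t, G t ≠ 0 := fun t => by
    obtain ⟨u, hu, hGu⟩ := hGper.exists_mem_Ico hL t a
    rw [hGu, hGσ' (Ico_subset_Icc_self (hb ▸ hu))]
    exact norm_pos_iff.mp (hne u (Ico_subset_Icc_self (hb ▸ hu)))
  have hφG : IsArgLiftOn G φ (Icc a (a + (b - a))) := by
    rw [hb]
    exact ⟨hφ, fun t ht => by rw [hGσ' ht]; exact hlift t ht⟩
  simpa only [hb] using sub_eq_two_pi_or_neg_of_periodic hf hG hfper hL hG0 hsimple hφG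
end

section
/- Let θ : (a,b) → ℝ be continuous and satisfy: θ is strictly increasing on every interval where cos θ ≤ 0, and whenever θ(t) = ℓπ + π/2 for some integer ℓ then θ is strictly increasing in a neighborhood of t. Let e ∈ (a,b) and ℓ₁, ℓ₂ ∈ ℤ with ℓ₁π + π/2 ≤ θ(e) ≤ ℓ₂π + π/2. Then θ(t) > ℓ₁π + π/2 for all t ∈ (e,b), and θ(t) < ℓ₂π + π/2 for all t ∈ (a,e). -/
/-!
Local strict monotonicity makes `θ` cross every level `L = ℓπ + π/2` strictly upwards: it is
below `L` just before and above `L` just after. Real induction on `{t | L ≤ θ t}` then shows that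
a continuous function with this property never gets back below a level it has reached, and
`θ t = L` at a later time `t` is excluded by the points just before `t`. The backward statement
is the same fact with the orders of domain and codomain both reversed.
-/

open Set Filter Topology

section Crossing

variable {α β : Type*} [ConditionallyCompleteLinearOrder α] [TopologicalSpace α] [OrderTopology α]
  [DenselyOrdered α] [LinearOrder β] [TopologicalSpace β] [OrderClosedTopology β]
  {f : α → β} {x y : α} {L : β}

theorem ContinuousOn.lt_apply_of_le_apply_of_crossing_up (hf : ContinuousOn f (Icc x y))
    (hcross : ∀ z ∈ Icc x y, f z = L →
      (∀ᶠ w in 𝓝[<] z, f w < L) ∧ ∀ᶠ w in 𝓝[>] z, L < f w)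
    (hxy : x < y) (hx : L ≤ f x) : L < f y := by
  have hle : Icc x y ⊆ {w | L ≤ f w} := by
    refine IsClosed.Icc_subset_of_forall_mem_nhdsWithin ?_ hx fun z ⟨hz, hzx, hzy⟩ ↦ ?_
    · rw [inter_comm]
      exact hf.preimage_isClosed_of_isClosed isClosed_Icc isClosed_Ici
    rcases (show L ≤ f z from hz).lt_or_eq with hlt | heq
    · have hcont : ContinuousWithinAt f (Ioi z) z :=
        (hf z ⟨hzx, hzy.le⟩).mono_of_mem_nhdsWithin (Icc_mem_nhdsGT_of_mem ⟨hzx, hzy⟩)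
      exact (hcont.eventually_const_lt hlt).mono fun w hw ↦ hw.le
    · exact ((hcross z ⟨hzx, hzy.le⟩ heq.symm).2).mono fun w hw ↦ hw.le
  refine (hle ⟨hxy.le, le_rfl⟩).lt_of_ne fun heq ↦ ?_
  have := nhdsLT_neBot_of_exists_lt ⟨x, hxy⟩
  obtain ⟨w, hwL, hw⟩ := (((hcross y ⟨hxy.le, le_rfl⟩ heq.symm).1).and
    (Icc_mem_nhdsLT_of_mem ⟨hxy, le_rfl⟩)).exists
  exact (hwL.trans_le (hle hw)).false

theorem ContinuousOn.apply_lt_of_apply_le_of_crossing_up (hf : ContinuousOn f (Icc x y))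
    (hcross : ∀ z ∈ Icc x y, f z = L →
      (∀ᶠ w in 𝓝[<] z, f w < L) ∧ ∀ᶠ w in 𝓝[>] z, L < f w)
    (hxy : x < y) (hy : f y ≤ L) : f x < L :=
  ContinuousOn.lt_apply_of_le_apply_of_crossing_up (α := αᵒᵈ) (β := βᵒᵈ)
    (f := OrderDual.toDual ∘ f ∘ OrderDual.ofDual)
    ((continuous_toDual.comp_continuousOn hf).comp continuous_ofDual.continuousOn
      fun _ hz ↦ ⟨hz.2, hz.1⟩) (fun z hz hfz ↦ (hcross z ⟨hz.2, hz.1⟩ hfz).symm) hxy hy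

end Crossing

theorem StrictMonoOn.eventually_lt_and_eventually_gt_of_mem_nhds {α β : Type*} [LinearOrder α]
    [TopologicalSpace α] [OrderTopology α] [Preorder β] {f : α → β} {s : Set α} {z : α}
    (hf : StrictMonoOn f s) (hs : s ∈ 𝓝 z) :
    (∀ᶠ w in 𝓝[<] z, f w < f z) ∧ ∀ᶠ w in 𝓝[>] z, f z < f w := by
  have hz : z ∈ s := mem_of_mem_nhds hs
  constructor
  · filter_upwards [self_mem_nhdsWithin, nhdsWithin_le_nhds hs] with w hwz hw using hf hw hz hwz
  · filter_upwards [self_mem_nhdsWithin, nhdsWithin_le_nhds hs] with w hzw hw using hf hz hw hzw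

theorem level_crossing_general
    (a b : ℝ) (θ : ℝ → ℝ)
    (hcont : ContinuousOn θ (Set.Ioo a b))
    (hloc : ∀ t ∈ Set.Ioo a b, (∃ ℓ : ℤ, θ t = ℓ * Real.pi + Real.pi / 2) →
      ∃ ε > (0:ℝ), StrictMonoOn θ (Set.Ioo (t - ε) (t + ε) ∩ Set.Ioo a b))
    (e : ℝ) (he : e ∈ Set.Ioo a b) (ℓ₁ ℓ₂ : ℤ)
    (h₁ : (ℓ₁ : ℝ) * Real.pi + Real.pi / 2 ≤ θ e)
    (h₂ : θ e ≤ (ℓ₂ : ℝ) * Real.pi + Real.pi / 2) :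
    (∀ t ∈ Set.Ioo e b, (ℓ₁ : ℝ) * Real.pi + Real.pi / 2 < θ t) ∧
    (∀ t ∈ Set.Ioo a e, θ t < (ℓ₂ : ℝ) * Real.pi + Real.pi / 2) := by
  have hcross : ∀ ℓ : ℤ, ∀ z ∈ Ioo a b, θ z = ℓ * Real.pi + Real.pi / 2 →
      (∀ᶠ w in 𝓝[<] z, θ w < ℓ * Real.pi + Real.pi / 2) ∧
        ∀ᶠ w in 𝓝[>] z, ℓ * Real.pi + Real.pi / 2 < θ w := by
    intro ℓ z hz hθz
    obtain ⟨ε, hε, hmono⟩ := hloc z hz ⟨ℓ, hθz⟩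
    rw [← hθz]
    exact hmono.eventually_lt_and_eventually_gt_of_mem_nhds
      (inter_mem (Ioo_mem_nhds (by linarith) (by linarith)) (Ioo_mem_nhds hz.1 hz.2))
  refine ⟨fun t ht ↦ ?_, fun t ht ↦ ?_⟩
  · have hsub : Icc e t ⊆ Ioo a b := Icc_subset_Ioo he.1 ht.2
    exact (hcont.mono hsub).lt_apply_of_le_apply_of_crossing_up
      (fun z hz ↦ hcross ℓ₁ z (hsub hz)) ht.1 h₁
  · have hsub : Icc t e ⊆ Ioo a b := Icc_subset_Ioo ht.1 he.2
    exact (hcont.mono hsub).apply_lt_of_apply_le_of_crossing_up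
      (fun z hz ↦ hcross ℓ₂ z (hsub hz)) ht.2 h₂

/-- Abstraction of Lemma 4.4 (LISO): if a continuous function `θ` on `(a,b)` is
strictly increasing on every subinterval where `cos θ ≤ 0`, and strictly increasing
near every point where `θ = ℓπ + π/2`, then once `θ` reaches the level
`ℓ₁π + π/2` at `e` from below (resp. `ℓ₂π + π/2` from above), it stays strictly
above (resp. below) that level forwards (resp. backwards) in time. -/
theorem level_crossing
    (a b : ℝ) (θ : ℝ → ℝ)
    (hcont : ContinuousOn θ (Set.Ioo a b))
    (hmono : ∀ s t : ℝ, a < s → s ≤ t → t < b →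
      (∀ x ∈ Set.Icc s t, Real.cos (θ x) ≤ 0) → StrictMonoOn θ (Set.Icc s t))
    (hloc : ∀ t ∈ Set.Ioo a b, (∃ ℓ : ℤ, θ t = ℓ * Real.pi + Real.pi / 2) →
      ∃ ε > (0:ℝ), StrictMonoOn θ (Set.Ioo (t - ε) (t + ε) ∩ Set.Ioo a b))
    (e : ℝ) (he : e ∈ Set.Ioo a b) (ℓ₁ ℓ₂ : ℤ)
    (h₁ : (ℓ₁ : ℝ) * Real.pi + Real.pi / 2 ≤ θ e)
    (h₂ : θ e ≤ (ℓ₂ : ℝ) * Real.pi + Real.pi / 2) :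
    (∀ t ∈ Set.Ioo e b, (ℓ₁ : ℝ) * Real.pi + Real.pi / 2 < θ t) ∧
    (∀ t ∈ Set.Ioo a e, θ t < (ℓ₂ : ℝ) * Real.pi + Real.pi / 2) :=
  level_crossing_general a b θ hcont hloc e he ℓ₁ ℓ₂ h₁ h₂
end
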